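/- arXiv:1708.02364 — 5 statements merged into one kernel-verified Lean document; each statement's English description precedes it below -/
import Mathlib

section
/- Let R be a commutative ring, M an Ohm-Rush R-module, and I an ideal of R. Then M/IM is an Ohm-Rush module over R/I, and for any f ∈ M, the content of the image of f in M/IM over R/I equals (c(f) + I)/I. -/
/-!
Every ideal `K` of `R/I` is the image of `K' = π⁻¹(K) ⊇ I`, and the `R`-submodule of `M/IM`
underlying `K • (M/IM)` is the image of `K'M`. Hence `f̄ ∈ K • (M/IM)` iff `f ∈ (K' + I)M = K'M`,
which for an Ohm-Rush module means `c(f) ≤ K'`, i.e. `π(c(f)) ≤ K`. So the ideals `K` with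
`f̄ ∈ K • (M/IM)` are exactly those above `π(c(f))`: this is the content of `f̄`, and it is
attained.
-/

/-- The Ohm-Rush content of `f ∈ M`: the intersection of all ideals `I` of `R`
with `f ∈ I·M`. -/
noncomputable def ohmRushContent (R : Type*) {M : Type*} [CommRing R] [AddCommGroup M]
    [Module R M] (f : M) : Ideal R :=
  sInf {I : Ideal R | f ∈ I • (⊤ : Submodule R M)}

/-- `M` is an Ohm-Rush module if `f ∈ c(f)·M` for every `f ∈ M`. -/
def IsOhmRush (R M : Type*) [CommRing R] [AddCommGroup M] [Module R M] : Prop :=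
  ∀ f : M, f ∈ ohmRushContent R f • (⊤ : Submodule R M)

section

variable {R M : Type*} [CommRing R] [AddCommGroup M] [Module R M]

theorem ohmRushContent_eq_of_forall_mem_smul_top_iff {f : M} {c : Ideal R}
    (h : ∀ J : Ideal R, f ∈ J • (⊤ : Submodule R M) ↔ c ≤ J) : ohmRushContent R f = c := by
  rw [ohmRushContent, show {J : Ideal R | f ∈ J • (⊤ : Submodule R M)} = Set.Ici c from
    Set.ext h, csInf_Ici]

theorem IsOhmRush.mem_smul_top_iff (hM : IsOhmRush R M) (f : M) (J : Ideal R) :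
    f ∈ J • (⊤ : Submodule R M) ↔ ohmRushContent R f ≤ J :=
  ⟨fun hf => sInf_le hf, fun hc => Submodule.smul_mono_left hc (hM f)⟩

theorem isOhmRush_of_forall_exists_mem_smul_top_iff
    (h : ∀ f : M, ∃ c : Ideal R, ∀ J : Ideal R, f ∈ J • (⊤ : Submodule R M) ↔ c ≤ J) :
    IsOhmRush R M := by
  intro f
  obtain ⟨c, hc⟩ := h f
  rw [ohmRushContent_eq_of_forall_mem_smul_top_iff hc, hc]

theorem Submodule.Quotient.mk_mem_map_smul_top_iff (I J : Ideal R) (f : M) :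
    mk (p := I • (⊤ : Submodule R M)) f ∈
        J.map (Ideal.Quotient.mk I) • (⊤ : Submodule (R ⧸ I) (M ⧸ I • (⊤ : Submodule R M))) ↔
      f ∈ (J ⊔ I) • (⊤ : Submodule R M) := by
  have image_eq :=
    Ideal.smul_restrictScalars (S := R ⧸ I) (M := M ⧸ I • (⊤ : Submodule R M)) J ⊤
  rw [restrictScalars_top, ← (I • ⊤ : Submodule R M).range_mkQ, LinearMap.range_eq_map,
    ← map_smul'', Ideal.Quotient.algebraMap_eq] at image_eq
  rw [← restrictScalars_mem R, image_eq, sup_smul, sup_comm, ← comap_map_mkQ, mem_comap,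
    mkQ_apply]

theorem IsOhmRush.mk_mem_smul_top_iff {I : Ideal R} (hM : IsOhmRush R M) (f : M)
    (K : Ideal (R ⧸ I)) :
    Submodule.Quotient.mk (p := I • (⊤ : Submodule R M)) f ∈
        K • (⊤ : Submodule (R ⧸ I) (M ⧸ I • (⊤ : Submodule R M))) ↔
      (ohmRushContent R f).map (Ideal.Quotient.mk I) ≤ K := by
  have hIK : I ≤ K.comap (Ideal.Quotient.mk I) := by
    simpa only [Ideal.mk_ker] using Ideal.ker_le_comap (Ideal.Quotient.mk I)
  rw [Ideal.map_le_iff_le_comap, ← hM.mem_smul_top_iff, ← sup_eq_left.mpr hIK,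
    ← Submodule.Quotient.mk_mem_map_smul_top_iff,
    Ideal.map_comap_of_surjective _ Ideal.Quotient.mk_surjective]

end

/-- If `M` is Ohm-Rush over `R` and `I` is an ideal of `R`, then `M/IM` is Ohm-Rush over
`R/I`, and the content over `R/I` of the image of `f` equals `(c(f) + I)/I`. -/
theorem quotient_ohmRush (R M : Type*) [CommRing R] [AddCommGroup M] [Module R M]
    (hOR : IsOhmRush R M) (I : Ideal R) :
    IsOhmRush (R ⧸ I) (M ⧸ (I • (⊤ : Submodule R M))) ∧
      ∀ f : M,
        ohmRushContent (R ⧸ I)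
            (Submodule.Quotient.mk (p := I • (⊤ : Submodule R M)) f) =
          Ideal.map (Ideal.Quotient.mk I) (ohmRushContent R f) := by
  refine ⟨isOhmRush_of_forall_exists_mem_smul_top_iff fun g => ?_, fun f =>
    ohmRushContent_eq_of_forall_mem_smul_top_iff (hOR.mk_mem_smul_top_iff f)⟩
  obtain ⟨f, rfl⟩ := Submodule.Quotient.mk_surjective _ g
  exact ⟨_, hOR.mk_mem_smul_top_iff f⟩
end

section
/- Let (R, m) → (S, n) be a flat local homomorphism of commutative local rings with n = m·S, and suppose R is Artinian and Gorenstein. Then S is Artinian and Gorenstein. -/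
/-!
Since `R` is Artinian, `m` is finitely generated and nilpotent, hence so is `n = m·S`; a local
ring whose maximal ideal is finitely generated and nilpotent has that ideal as its only prime,
so it is Noetherian by Cohen's theorem and therefore Artinian. For the socle, write
`Ann_R(m)` as the kernel of `r ↦ (r aᵢ)ᵢ` for generators `aᵢ` of `m`: flatness of `S` turns it
into the kernel of `s ↦ (s aᵢ)ᵢ`, so `Ann_S(n) = Ann_R(m)·S = x·S`. Finally `R → S` is a flat
local homomorphism, hence faithfully flat and injective, so the image of `x` is nonzero.
-/

open IsLocalRing TensorProduct

theorem Ideal.map_annihilator_le_annihilator_map {R S : Type*} [CommRing R] [CommRing S]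
    (f : R →+* S) (I : Ideal R) :
    (Submodule.annihilator I).map f ≤ Submodule.annihilator (I.map f) := by
  rw [Submodule.le_annihilator_iff, Ideal.smul_eq_mul, ← Ideal.map_mul,
    Submodule.annihilator_mul, Ideal.map_bot]

theorem Ideal.annihilator_map_le_map_annihilator_of_flat {R S : Type*} [CommRing R]
    [CommRing S] [Algebra R S] [Module.Flat R S] {I : Ideal R} (hI : I.FG) :
    Submodule.annihilator (I.map (algebraMap R S)) ≤
      (Submodule.annihilator I).map (algebraMap R S) := by
  classical
  obtain ⟨T, rfl⟩ := hI
  let f : R →ₗ[R] T → R := LinearMap.pi fun t => LinearMap.toSpanSingleton R R (t : R)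
  have hker : LinearMap.ker f = Submodule.annihilator (Ideal.span (T : Set R)) := by
    ext r
    simp [f, Ideal.span, Submodule.mem_annihilator_span, funext_iff]
  have hrange : ∀ w, AlgebraTensorModule.rid R S S
      (AlgebraTensorModule.lTensor S S (LinearMap.ker f).subtype w) ∈
        (Submodule.annihilator (Ideal.span (T : Set R))).map (algebraMap R S) := by
    intro w
    induction w using TensorProduct.induction_on with
    | zero => simp
    | tmul s a =>
      rw [AlgebraTensorModule.lTensor_tmul, AlgebraTensorModule.rid_tmul, Algebra.smul_def]
      exact Ideal.mul_mem_right _ _ (Ideal.mem_map_of_mem _ (hker ▸ a.2))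
    | add u v hu hv => simpa only [map_add] using Ideal.add_mem _ hu hv
  intro s hs
  have hzero : s ⊗ₜ[R] (1 : R) ∈ LinearMap.ker (AlgebraTensorModule.lTensor S S f) := by
    rw [LinearMap.mem_ker, ← (TensorProduct.piScalarRight R S S T).map_eq_zero_iff]
    funext t
    have ht : algebraMap R S t ∈ (Ideal.span (T : Set R)).map (algebraMap R S) :=
      Ideal.mem_map_of_mem _ (Ideal.subset_span t.2)
    simpa [f, Algebra.smul_def, mul_comm] using Submodule.mem_annihilator.mp hs _ ht
  obtain ⟨w, hw⟩ := (Module.Flat.ker_lTensor_eq S S f).le hzero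
  simpa [hw] using hrange w

theorem Ideal.annihilator_map_of_flat {R S : Type*} [CommRing R] [CommRing S] [Algebra R S]
    [Module.Flat R S] {I : Ideal R} (hI : I.FG) :
    Submodule.annihilator (I.map (algebraMap R S)) =
      (Submodule.annihilator I).map (algebraMap R S) :=
  le_antisymm (annihilator_map_le_map_annihilator_of_flat hI)
    (map_annihilator_le_annihilator_map _ I)

namespace IsLocalRing

variable {A : Type*} [CommRing A] [IsLocalRing A]

theorem eq_maximalIdeal_of_isPrime_of_isNilpotent (hnil : IsNilpotent (maximalIdeal A))
    {P : Ideal A} (hP : P.IsPrime) : P = maximalIdeal A := by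
  obtain ⟨k, hk⟩ := hnil
  exact le_antisymm (le_maximalIdeal hP.ne_top)
    (hP.le_of_pow_le (hk ▸ bot_le : maximalIdeal A ^ k ≤ P))

theorem isArtinianRing_of_fg_of_isNilpotent (hfg : (maximalIdeal A).FG)
    (hnil : IsNilpotent (maximalIdeal A)) : IsArtinianRing A := by
  have : IsNoetherianRing A := IsNoetherianRing.of_prime fun _ hP =>
    eq_maximalIdeal_of_isPrime_of_isNilpotent hnil hP ▸ hfg
  exact (isArtinianRing_iff_isNilpotent_maximalIdeal A).mpr hnil

end IsLocalRing

/-- Ascent of the Artinian Gorenstein property along a flat local map with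
`n = m·S`.  Gorensteinness of an Artinian local ring is expressed by the socle
(the annihilator of the maximal ideal) being one-dimensional over the residue field,
i.e. generated by a single nonzero element. -/
theorem artinian_gorenstein_ascends (R S : Type*) [CommRing R] [CommRing S]
    [IsLocalRing R] [IsLocalRing S] [Algebra R S] [Module.Flat R S]
    (hn : IsLocalRing.maximalIdeal S =
      Ideal.map (algebraMap R S) (IsLocalRing.maximalIdeal R))
    (hart : IsArtinianRing R)
    (hgor : ∃ x : R, x ≠ 0 ∧
      Submodule.annihilator (IsLocalRing.maximalIdeal R) = Ideal.span {x}) :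
    IsArtinianRing S ∧ ∃ y : S, y ≠ 0 ∧
      Submodule.annihilator (IsLocalRing.maximalIdeal S) = Ideal.span {y} := by
  obtain ⟨x, hx0, hsocle⟩ := hgor
  have hfg : (maximalIdeal R).FG := IsNoetherian.noetherian _
  have hnil : IsNilpotent (maximalIdeal R) :=
    (isArtinianRing_iff_isNilpotent_maximalIdeal R).mp hart
  have : IsLocalHom (algebraMap R S) := ((local_hom_TFAE (algebraMap R S)).out 0 2).mpr hn.ge
  have : Module.FaithfullyFlat R S := .of_flat_of_isLocalHom
  refine ⟨isArtinianRing_of_fg_of_isNilpotent (hn ▸ hfg.map (algebraMap R S))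
    (hn ▸ hnil.map (Ideal.mapHom (algebraMap R S))), algebraMap R S x, ?_, ?_⟩
  · exact (map_ne_zero_iff _ (FaithfulSMul.algebraMap_injective R S)).mpr hx0
  · rw [hn, Ideal.annihilator_map_of_flat hfg, hsocle, Ideal.map_span, Set.image_singleton]
end

section
/- Let R be a commutative local ring, S a semicontent R-algebra, and f ∈ S such that the content c(f) is a principal ideal of R. Then f is Gaussian, i.e., c(f·g) = c(f)·c(g) for all g ∈ S. -/
/-- `S` is a semicontent `R`-algebra: a faithfully flat Ohm-Rush algebra such that
for every multiplicative subset `W` of `R` and all `f, g ∈ S` with `c(f)_W = R_W`,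
one has `c(fg)_W = c(g)_W`. -/
def IsSemicontentAlgebra (R S : Type*) [CommRing R] [CommRing S] [Algebra R S] : Prop :=
  Module.FaithfullyFlat R S ∧ IsOhmRush R S ∧
    ∀ (W : Submonoid R) (f g : S),
      Ideal.map (algebraMap R (Localization W)) (ohmRushContent R f) = ⊤ →
      Ideal.map (algebraMap R (Localization W)) (ohmRushContent R (f * g)) =
        Ideal.map (algebraMap R (Localization W)) (ohmRushContent R g)

/-- `f` is a Gaussian element: `c(fg) = c(f)·c(g)` for all `g ∈ S`. -/
def IsGaussianElement (R : Type*) {S : Type*} [CommRing R] [CommRing S] [Algebra R S]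
    (f : S) : Prop :=
  ∀ g : S, ohmRushContent R (f * g) = ohmRushContent R f * ohmRushContent R g

/-!
Since `S` is Ohm-Rush, `c(f) = (a)` lets us write `f = a • f'`, and then
`(a) = c(a f') ⊆ (a) c(f')`. Over a local ring Nakayama's lemma leaves two cases: `a = 0`, so
`f = 0`; or `c(f') = R`, in which case the semicontent property (with `W = 1`) gives
`c(f' g) = c(g)`. Flatness yields `c(a h) = (a) c(h)`, because `a h ∈ I S` forces `h ∈ (I : a) S`;
hence `c(f g) = c(a f' g) = (a) c(f' g) = (a) c(g) = c(f) c(g)`.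
-/

open TensorProduct

theorem Module.Flat.mem_colon_smul_top_of_smul_mem {R M : Type*} [CommRing R] [AddCommGroup M]
    [Module R M] [Module.Flat R M] {a : R} {I : Ideal R} {x : M}
    (h : a • x ∈ I • (⊤ : Submodule R M)) :
    x ∈ I.colon (Ideal.span {a}) • (⊤ : Submodule R M) := by
  set J := I.colon (Ideal.span {a})
  -- multiplication by `a` embeds `R ⧸ (I : a)` into `R ⧸ I`, and stays injective after `M ⊗ -`
  let φ : (R ⧸ J) →ₗ[R] (R ⧸ I) := Submodule.mapQ J I (LinearMap.lsmul R R a) fun r hr => by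
    simpa [mul_comm] using Ideal.mem_colon_span_singleton.mp hr
  have hφ : Function.Injective φ := by
    rw [← LinearMap.ker_eq_bot, eq_bot_iff]
    rintro u hu
    obtain ⟨r, rfl⟩ := Ideal.Quotient.mk_surjective u
    have har : a * r ∈ I := Ideal.Quotient.eq_zero_iff_mem.mp hu
    exact (Submodule.mem_bot R).mpr <| Ideal.Quotient.eq_zero_iff_mem.mpr <|
      Ideal.mem_colon_span_singleton.mpr (by simpa [mul_comm] using har)
  have hxa : (x ⊗ₜ Ideal.Quotient.mk I a : M ⊗[R] (R ⧸ I)) = 0 := by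
    apply (tensorQuotEquivQuotSMul M I).injective
    rw [tensorQuotEquivQuotSMul_tmul_mk, map_zero]
    exact (Submodule.Quotient.mk_eq_zero _).mpr h
  have hx1 : (x ⊗ₜ Ideal.Quotient.mk J 1 : M ⊗[R] (R ⧸ J)) = 0 := by
    apply Module.Flat.lTensor_preserves_injective_linearMap φ hφ
    rw [LinearMap.lTensor_tmul, map_zero]
    show x ⊗ₜ Ideal.Quotient.mk I (a * 1) = 0
    rwa [mul_one]
  have := congrArg (tensorQuotEquivQuotSMul M J) hx1
  rw [tensorQuotEquivQuotSMul_tmul_mk, map_zero, one_smul] at this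
  exact (Submodule.Quotient.mk_eq_zero _).mp this

section OhmRushContent

variable {R M : Type*} [CommRing R] [AddCommGroup M] [Module R M]

theorem ohmRushContent_le {f : M} {I : Ideal R} (h : f ∈ I • (⊤ : Submodule R M)) :
    ohmRushContent R f ≤ I :=
  sInf_le h

theorem ohmRushContent_zero : ohmRushContent R (0 : M) = ⊥ :=
  eq_bot_iff.mpr (ohmRushContent_le (zero_mem _))

theorem ohmRushContent_smul_le {h : M} (hh : h ∈ ohmRushContent R h • (⊤ : Submodule R M))
    (a : R) : ohmRushContent R (a • h) ≤ Ideal.span {a} * ohmRushContent R h := by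
  apply ohmRushContent_le
  rw [← Ideal.smul_eq_mul, Submodule.smul_assoc, Submodule.ideal_span_singleton_smul]
  exact Submodule.smul_mem_pointwise_smul _ _ _ hh

theorem le_ohmRushContent_smul [Module.Flat R M] (h : M) (a : R) :
    Ideal.span {a} * ohmRushContent R h ≤ ohmRushContent R (a • h) := by
  refine le_sInf fun I hI => Ideal.mul_le.mpr fun r hr s hs => ?_
  have hsa : s * a ∈ I := by
    simpa [mul_comm] using Ideal.mem_colon_span_singleton.mp
      (ohmRushContent_le (Module.Flat.mem_colon_smul_top_of_smul_mem hI) hs)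
  obtain ⟨x, rfl⟩ := Ideal.mem_span_singleton'.mp hr
  simpa [mul_assoc, mul_comm a] using I.mul_mem_left x hsa

theorem ohmRushContent_smul [Module.Flat R M] {h : M}
    (hh : h ∈ ohmRushContent R h • (⊤ : Submodule R M)) (a : R) :
    ohmRushContent R (a • h) = Ideal.span {a} * ohmRushContent R h :=
  (ohmRushContent_smul_le hh a).antisymm (le_ohmRushContent_smul h a)

theorem IsOhmRush.exists_smul_eq (hM : IsOhmRush R M) {f : M} {a : R}
    (hf : ohmRushContent R f = Ideal.span {a}) : ∃ f' : M, a • f' = f := by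
  have := hM f
  rw [hf, Submodule.ideal_span_singleton_smul] at this
  obtain ⟨f', -, hf'⟩ := (Submodule.mem_smul_pointwise_iff_exists _ _ _).mp this
  exact ⟨f', hf'⟩

end OhmRushContent

theorem IsLocalRing.eq_zero_or_eq_top_of_span_singleton_le_mul {R : Type*} [CommRing R]
    [IsLocalRing R] {a : R} {I : Ideal R} (h : Ideal.span {a} ≤ Ideal.span {a} * I) :
    a = 0 ∨ I = ⊤ := by
  refine or_iff_not_imp_right.mpr fun hI => Ideal.span_singleton_eq_bot.mp ?_
  refine Submodule.eq_bot_of_le_smul_of_le_jacobson_bot I _ (Submodule.fg_span_singleton a)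
    (by rwa [Ideal.smul_eq_mul, mul_comm]) ?_
  exact (IsLocalRing.le_maximalIdeal hI).trans (IsLocalRing.maximalIdeal_le_jacobson ⊥)

theorem IsSemicontentAlgebra.ohmRushContent_mul_of_eq_top {R S : Type*} [CommRing R]
    [CommRing S] [Algebra R S] (hS : IsSemicontentAlgebra R S) {f : S}
    (hf : ohmRushContent R f = ⊤) (g : S) : ohmRushContent R (f * g) = ohmRushContent R g := by
  -- localizing at the trivial submonoid changes nothing
  have hbij : Function.Bijective (algebraMap R (Localization (⊥ : Submonoid R))) := by
    let e : R ≃ₐ[R] Localization (⊥ : Submonoid R) := IsLocalization.atUnits R ⊥ bot_le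
    exact funext e.commutes ▸ e.bijective
  have := congrArg (Ideal.comap (algebraMap R (Localization (⊥ : Submonoid R))))
    (hS.2.2 ⊥ f g (by rw [hf, Ideal.map_top]))
  rwa [Ideal.comap_map_of_bijective _ hbij, Ideal.comap_map_of_bijective _ hbij] at this

/-- In a semicontent algebra over a local ring, an element whose content is principal
is Gaussian. -/
theorem gaussian_of_principal_content (R S : Type*) [CommRing R] [CommRing S]
    [IsLocalRing R] [Algebra R S] (hsc : IsSemicontentAlgebra R S) (f : S)
    (hp : ∃ a : R, ohmRushContent R f = Ideal.span {a}) :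
    IsGaussianElement R f := by
  have : Module.Flat R S := hsc.1.toFlat
  have hOR : IsOhmRush R S := hsc.2.1
  obtain ⟨a, ha⟩ := hp
  obtain ⟨f', rfl⟩ := hOR.exists_smul_eq ha
  have hle : Ideal.span {a} ≤ Ideal.span {a} * ohmRushContent R f' :=
    ha.symm.le.trans (ohmRushContent_smul_le (hOR f') a)
  intro g
  rcases IsLocalRing.eq_zero_or_eq_top_of_span_singleton_le_mul hle with rfl | htop
  · simp only [zero_smul, zero_mul, ohmRushContent_zero, Submodule.bot_mul]
  · rw [smul_mul_assoc, ohmRushContent_smul (hOR _), hsc.ohmRushContent_mul_of_eq_top htop, ha]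
end

section
/- Let R be a Noetherian commutative ring and S a semicontent R-algebra. If f ∈ S is a regular element (non-zerodivisor) of S, then c(f) contains a regular element of R. -/
/-! If `r ∈ R` annihilates `c(f)`, then `r` annihilates `f ∈ c(f)·S`; as `f` is regular and
`R → S` is injective (faithful flatness), `r = 0`. So `c(f)` is a faithful `R`-module, and over a
Noetherian ring a faithful ideal contains a nonzerodivisor: otherwise, by prime avoidance, it lies
in a single associated prime of `R`, hence is killed by a nonzero element. -/

theorem IsOhmRush.smul_eq_zero_of_mem_annihilator {R M : Type*} [CommRing R] [AddCommGroup M]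
    [Module R M] (h : IsOhmRush R M) {f : M} {r : R}
    (hr : r ∈ Module.annihilator R (ohmRushContent R f)) : r • f = 0 := by
  refine Submodule.smul_induction_on (h f) (fun a ha m _ ↦ ?_) (fun x y hx hy ↦ ?_)
  · have hra : r * a = 0 := congrArg Subtype.val (Module.mem_annihilator.mp hr ⟨a, ha⟩)
    rw [smul_smul, hra, zero_smul]
  · rw [smul_add, hx, hy, add_zero]

theorem IsOhmRush.faithfulSMul_ohmRushContent {R S : Type*} [CommRing R] [CommRing S]
    [Algebra R S] [FaithfulSMul R S] (h : IsOhmRush R S) {f : S}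
    (hf : f ∈ nonZeroDivisors S) : FaithfulSMul R (ohmRushContent R f) := by
  refine Module.annihilator_eq_bot.mp (eq_bot_iff.mpr fun r hr ↦ ?_)
  have hrf : algebraMap R S r * f = 0 := by
    rw [← Algebra.smul_def]
    exact h.smul_eq_zero_of_mem_annihilator hr
  exact (FaithfulSMul.algebraMap_injective R S).eq_iff.mp
    ((mem_nonZeroDivisors_iff_right.mp hf _ hrf).trans (map_zero _).symm)

/-- Over a Noetherian ring, if `f` is a regular element of a semicontent algebra `S`,
then `c(f)` contains a regular element of `R`. -/
theorem content_regular_of_regular (R S : Type*) [CommRing R] [CommRing S]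
    [IsNoetherianRing R] [Algebra R S] (hsc : IsSemicontentAlgebra R S) (f : S)
    (hreg : f ∈ nonZeroDivisors S) :
    ∃ r ∈ ohmRushContent R f, r ∈ nonZeroDivisors R := by
  obtain ⟨_, hOhmRush, -⟩ := hsc
  have := hOhmRush.faithfulSMul_ohmRushContent hreg
  exact Ideal.nonempty_inter_nonZeroDivisors_of_faithfulSMul
end

section
/- Let (R, m) be a local integral domain and S an R-algebra that is free of rank > 1 as an R-module. If R has an ideal I minimally generated by two elements (i.e., I is 2-generated but not principal), then there exists a non-Gaussian element f ∈ S with c(f) = I. -/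
/-!
Take `I = (a, b)` and two distinct basis vectors `e, w` of `S`, and put `f = a e + b w`, so that
`c(f) = (a, b)`. For every `g = u e + v w` we have `c(g) = (u, v)`, while `fg` is an `R`-combination
of `e², ew, w²` with coefficients `au, av + bu, bv`. So if `f` were Gaussian, then
`(a, b)(u, v) ⊆ (au, av + bu, bv)` for all `u, v`. Taking `(u, v) = (b, a)` and using that `R` is
local gives, up to swapping `a` and `b`, a relation `b² = pab + qa²`; then `(u, v) = (a, pa - b)`
gives `a(pa - b) ∈ (a²)`, hence `b ∈ (a)` since `R` is a domain, and `I` would be principal.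
-/

open Ideal

section Content

variable {R M : Type*} [CommRing R] [AddCommGroup M] [Module R M]

theorem LinearMap.apply_mem_ohmRushContent (φ : M →ₗ[R] R) (x : M) :
    φ x ∈ ohmRushContent R x :=
  Submodule.mem_sInf.mpr fun I hx => by
    simpa [smul_eq_mul, Ideal.mul_top] using Submodule.smul_top_le_comap_smul_top I φ hx

theorem ohmRushContent_smul_add_smul {ι : Type*} (B : Module.Basis ι R M) {i j : ι}
    (hij : i ≠ j) (u v : R) : ohmRushContent R (u • B i + v • B j) = span {u, v} := by
  refine le_antisymm (sInf_le ?_) (span_le.mpr ?_)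
  · exact add_mem (Submodule.smul_mem_smul (subset_span (by simp)) Submodule.mem_top)
      (Submodule.smul_mem_smul (subset_span (by simp)) Submodule.mem_top)
  · simp only [Set.insert_subset_iff, Set.singleton_subset_iff, SetLike.mem_coe]
    constructor
    · simpa [hij] using (B.coord i).apply_mem_ohmRushContent (u • B i + v • B j)
    · simpa [hij.symm] using (B.coord j).apply_mem_ohmRushContent (u • B i + v • B j)

end Content

theorem ohmRushContent_mul_le {R S : Type*} [CommRing R] [CommRing S] [Algebra R S] (e w : S)
    (a b u v : R) :
    ohmRushContent R ((a • e + b • w) * (u • e + v • w)) ≤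
      span {a * u, a * v + b * u, b * v} := by
  have hexpand : (a • e + b • w) * (u • e + v • w) =
      (a * u) • (e * e) + (a * v + b * u) • (e * w) + (b * v) • (w * w) := by
    simp only [mul_add, add_mul, smul_mul_smul_comm, mul_comm w e, add_smul]
    abel
  rw [hexpand]
  apply sInf_le
  show _ ∈ (span _ : Ideal R) • (⊤ : Submodule R S)
  refine add_mem (add_mem ?_ ?_) ?_ <;>
    exact Submodule.smul_mem_smul (subset_span (by simp)) Submodule.mem_top

section SpanPair

variable {R : Type*} [CommRing R]

theorem sq_mem_span_or_sq_mem_span_of_sq_mem [IsLocalRing R] {a b : R}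
    (h : b * b ∈ span {a * b, a * a + b * b}) :
    b * b ∈ span {a * b, a * a} ∨ a * a ∈ span {b * a, b * b} := by
  obtain ⟨x, y, hxy⟩ := mem_span_pair.mp h
  rcases IsLocalRing.isUnit_or_isUnit_of_add_one (sub_add_cancel 1 y) with h1y | hy
  · left
    exact (unit_mul_mem_iff_mem _ h1y).mp (mem_span_pair.mpr ⟨x, y, by linear_combination hxy⟩)
  · right
    exact (unit_mul_mem_iff_mem _ hy).mp
      (mem_span_pair.mpr ⟨-x, 1 - y, by linear_combination -hxy⟩)

variable [IsDomain R]

theorem isPrincipal_span_pair_of_sq_mem {a b : R} (hsq : b * b ∈ span {a * b, a * a})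
    (h : ∀ u v : R, span {a, b} * span {u, v} ≤ span {a * u, a * v + b * u, b * v}) :
    (span {a, b}).IsPrincipal := by
  rcases eq_or_ne a 0 with rfl | ha
  · exact ⟨b, span_insert_zero⟩
  obtain ⟨p, q, hpq⟩ := mem_span_pair.mp hsq
  have hmem : a * (p * a - b) ∈ span {a * a} := by
    refine span_le.mpr ?_ (h a (p * a - b) (mul_mem_mul (subset_span (by simp))
      (subset_span (by simp))))
    simp only [Set.insert_subset_iff, Set.singleton_subset_iff, SetLike.mem_coe,
      mem_span_singleton']
    exact ⟨⟨1, one_mul _⟩, ⟨p, by ring⟩, ⟨-q, by linear_combination -hpq⟩⟩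
  obtain ⟨r, hr⟩ := mem_span_singleton'.mp hmem
  have hb : b = (p - r) * a := mul_left_cancel₀ ha (by linear_combination hr)
  refine ⟨a, le_antisymm (span_le.mpr ?_) (span_mono (by simp))⟩
  simp only [Set.insert_subset_iff, Set.singleton_subset_iff, SetLike.mem_coe,
    mem_span_singleton']
  exact ⟨⟨1, one_mul _⟩, ⟨p - r, hb.symm⟩⟩

theorem isPrincipal_span_pair_of_forall_mul_le [IsLocalRing R] {a b : R}
    (h : ∀ u v : R, span {a, b} * span {u, v} ≤ span {a * u, a * v + b * u, b * v}) :
    (span {a, b}).IsPrincipal := by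
  have hsq : b * b ∈ span {a * b, a * a + b * b} := by
    have := h b a (mul_mem_mul (subset_span (Set.mem_insert_of_mem _ rfl))
      (subset_span (Set.mem_insert _ _)))
    rwa [mul_comm b a, Set.pair_comm (a * a + b * b), Set.insert_idem] at this
  rcases sq_mem_span_or_sq_mem_span_of_sq_mem hsq with hb | ha
  · exact isPrincipal_span_pair_of_sq_mem hb h
  · rw [Set.pair_comm]
    refine isPrincipal_span_pair_of_sq_mem ha fun u v => ?_
    have := h v u
    rwa [Set.pair_comm a, Set.pair_comm v, add_comm (a * u), Set.pair_comm (b * v + a * u),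
      Set.insert_comm (a * v), Set.pair_comm (a * v)] at this

end SpanPair

/-- Let `(R,m)` be a local domain and `S` an `R`-algebra free of rank `> 1` as an
`R`-module.  If `I` is an ideal of `R` that is 2-generated but not principal, then
there is a non-Gaussian element `f ∈ S` with `c(f) = I`. -/
theorem exists_nonGaussian_of_two_generated (R S : Type*) [CommRing R] [IsDomain R]
    [IsLocalRing R] [CommRing S] [Algebra R S] [Module.Free R S]
    (hrank : 1 < Module.rank R S)
    (I : Ideal R) (hI2 : ∃ a b : R, I = Ideal.span {a, b}) (hInp : ¬ I.IsPrincipal) :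
    ∃ f : S, ohmRushContent R f = I ∧ ¬ IsGaussianElement R f := by
  obtain ⟨a, b, rfl⟩ := hI2
  let B := Module.Free.chooseBasis R S
  obtain ⟨i, j, hij⟩ : ∃ i j : Module.Free.ChooseBasisIndex R S, i ≠ j := by
    rw [Module.Free.rank_eq_card_chooseBasisIndex, Cardinal.one_lt_iff_nontrivial] at hrank
    exact exists_pair_ne _
  refine ⟨a • B i + b • B j, ohmRushContent_smul_add_smul B hij a b, fun hG => hInp ?_⟩
  refine isPrincipal_span_pair_of_forall_mul_le fun u v => ?_
  calc span {a, b} * span {u, v}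
      = ohmRushContent R (a • B i + b • B j) * ohmRushContent R (u • B i + v • B j) := by
        rw [ohmRushContent_smul_add_smul B hij, ohmRushContent_smul_add_smul B hij]
    _ = ohmRushContent R ((a • B i + b • B j) * (u • B i + v • B j)) := (hG _).symm
    _ ≤ span {a * u, a * v + b * u, b * v} := ohmRushContent_mul_le _ _ a b u v
end
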